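/- Let 0 < α < 1, λ ∈ ℝ, τ > 0, and (v^k)_{k≥0} a real sequence with v^{-1} = 0. Then for every n ≥ 1: v^{n-1} · δ_t^{α,λ} v^n ≥ (1/2) e^{(1-α/2)λτ} δ_t^{α,2λ}(v^n)² − (e^{(1-α/2)λτ}/(2(l_0^α − l_1^α))) τ^α (δ_t^{α,λ} v^n)², where δ_t^{α,λ} and δ_t^{α,2λ} are defined as before and l_0^α − l_1^α = α > 0. -/

import Mathlib

noncomputable def binom (α : ℝ) (k : ℕ) : ℝ :=
  (∏ i ∈ Finset.range k, (α - i)) / (Nat.factorial k)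

noncomputable def g (α : ℝ) (k : ℕ) : ℝ := (-1) ^ k * binom α k

noncomputable def lcoef (α : ℝ) (n : ℕ) : ℝ := ∑ j ∈ Finset.range (n + 1), g α j

/-- `δ_t^{α,λ} v^n = τ^{-α} ∑_{k=0}^n e^{-(k-α/2)λτ} g_k^α v^{n-k}`. -/
noncomputable def delta (α lam τ : ℝ) (v : ℕ → ℝ) (n : ℕ) : ℝ :=
  τ ^ (-α) * ∑ k ∈ Finset.range (n + 1),
    Real.exp (-((k : ℝ) - α / 2) * lam * τ) * g α k * v (n - k)

/-!
Write `μ = λτ` and `w_k = e^{-kμ} v^{n-k}`. Then `δ_t^{α,λ} v^n` and `δ_t^{α,2λ} (v^n)²` are,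
up to the same positive factor, `S = ∑ g_k w_k` and `S₂ = ∑ g_k w_k²`, and `v^{n-1} = e^μ w_1`,
so the claim becomes `S₂ ≤ 2 w_1 S + S² / α`. Expanding around `w_0` gives
`2 w_0 S - S₂ = l_n w_0² - ∑ g_k (w_0 - w_k)² ≥ α (w_0 - w_1)²`, because `l_n ≥ 0`, `g_1 = -α`
and `g_k ≤ 0` for `k ≥ 2`; completing the square in `w_0 - w_1` finishes the proof.
-/

open Finset

@[simp]
lemma g_zero (α : ℝ) : g α 0 = 1 := by
  simp [g, binom]

lemma g_succ (α : ℝ) (k : ℕ) : g α (k + 1) = (k - α) / (k + 1) * g α k := by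
  have hk : ((Nat.factorial k : ℕ) : ℝ) ≠ 0 := by positivity
  simp only [g, binom, prod_range_succ, Nat.factorial_succ, Nat.cast_mul, pow_succ]
  field_simp
  push_cast
  ring

@[simp]
lemma g_one (α : ℝ) : g α 1 = -α := by
  simpa using g_succ α 0

lemma g_nonpos {α : ℝ} (hα0 : 0 < α) (hα1 : α < 1) {k : ℕ} (hk : 1 ≤ k) : g α k ≤ 0 := by
  induction k, hk using Nat.le_induction with
  | base => simpa using hα0.le
  | succ k hk ih =>
    rw [g_succ]
    have hratio : 0 ≤ (k - α) / (k + 1) := by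
      have : (1 : ℝ) ≤ k := by exact_mod_cast hk
      apply div_nonneg <;> linarith
    exact mul_nonpos_of_nonneg_of_nonpos hratio ih

/-- The identity `∑_{j ≤ n} (-1)^j C(α, j) = (-1)^n C(α - 1, n)`, written via `g α (n + 1)`. -/
lemma mul_lcoef (α : ℝ) (n : ℕ) : α * lcoef α n = -((n + 1) * g α (n + 1)) := by
  induction n with
  | zero => simp [lcoef]
  | succ n ih =>
    rw [lcoef, sum_range_succ, ← lcoef, mul_add, ih, g_succ α (n + 1)]
    push_cast
    field_simp
    ring

lemma lcoef_nonneg {α : ℝ} (hα0 : 0 < α) (hα1 : α < 1) (n : ℕ) : 0 ≤ lcoef α n := by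
  have h : 0 ≤ α * lcoef α n := by
    rw [mul_lcoef, neg_nonneg]
    exact mul_nonpos_of_nonneg_of_nonpos (by positivity) (g_nonpos hα0 hα1 (by omega))
  exact nonneg_of_mul_nonneg_right h hα0

lemma lcoef_zero_sub_lcoef_one (α : ℝ) : lcoef α 0 - lcoef α 1 = α := by
  simp [lcoef, sum_range_succ]

lemma two_mul_sum_mul_sub_sum_mul_sq {ι R : Type*} [CommRing R] (s : Finset ι) (a x : ι → R)
    (y : R) :
    2 * y * ∑ k ∈ s, a k * x k - ∑ k ∈ s, a k * x k ^ 2 =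
      (∑ k ∈ s, a k) * y ^ 2 - ∑ k ∈ s, a k * (y - x k) ^ 2 := by
  simp only [mul_sum, sum_mul, ← sum_sub_distrib]
  exact sum_congr rfl fun _ _ => by ring

lemma sum_mul_sq_le {a : ℕ → ℝ} {c : ℝ} {n : ℕ} (hc : 0 < c) (hn : 1 ≤ n) (ha1 : a 1 = -c)
    (ha : ∀ k, 2 ≤ k → a k ≤ 0) (hsum : 0 ≤ ∑ k ∈ range (n + 1), a k) (x : ℕ → ℝ) :
    ∑ k ∈ range (n + 1), a k * x k ^ 2 ≤
      2 * x 1 * ∑ k ∈ range (n + 1), a k * x k + (∑ k ∈ range (n + 1), a k * x k) ^ 2 / c := by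
  set S := ∑ k ∈ range (n + 1), a k * x k
  have hone : 1 ∈ range (n + 1) := mem_range.2 (by omega)
  have hrest : ∑ k ∈ (range (n + 1)).erase 1, a k * (x 0 - x k) ^ 2 ≤ 0 := by
    refine sum_nonpos fun k _ => ?_
    rcases Nat.lt_or_ge k 2 with hk | hk
    · interval_cases k <;> simp_all
    · exact mul_nonpos_of_nonpos_of_nonneg (ha k hk) (sq_nonneg _)
  have hexpand : c * (x 0 - x 1) ^ 2 ≤ 2 * x 0 * S - ∑ k ∈ range (n + 1), a k * x k ^ 2 := by
    rw [two_mul_sum_mul_sub_sum_mul_sq,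
      ← add_sum_erase (range (n + 1)) (fun k => a k * (x 0 - x k) ^ 2) hone, ha1]
    linarith [mul_nonneg hsum (sq_nonneg (x 0))]
  have hsquare : 0 ≤ S ^ 2 / c - 2 * (x 0 - x 1) * S + c * (x 0 - x 1) ^ 2 := by
    have : S ^ 2 / c - 2 * (x 0 - x 1) * S + c * (x 0 - x 1) ^ 2 =
        (S - c * (x 0 - x 1)) ^ 2 / c := by
      field_simp
      ring
    rw [this]
    positivity
  linarith

lemma delta_eq (α lam τ : ℝ) (v : ℕ → ℝ) (n : ℕ) :
    delta α lam τ v n = τ ^ (-α) * Real.exp (α / 2 * (lam * τ)) *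
      ∑ k ∈ range (n + 1), g α k * (Real.exp (-(k * (lam * τ))) * v (n - k)) := by
  rw [delta, mul_assoc]
  congr 1
  rw [mul_sum]
  refine sum_congr rfl fun k _ => ?_
  rw [show -((k : ℝ) - α / 2) * lam * τ = α / 2 * (lam * τ) + -(k * (lam * τ)) by ring,
    Real.exp_add]
  ring

lemma delta_sq_eq (α lam τ : ℝ) (v : ℕ → ℝ) (n : ℕ) :
    delta α (2 * lam) τ (fun k => v k ^ 2) n = τ ^ (-α) * Real.exp (α / 2 * (lam * τ)) ^ 2 *
      ∑ k ∈ range (n + 1), g α k * (Real.exp (-(k * (lam * τ))) * v (n - k)) ^ 2 := by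
  rw [delta_eq]
  congr 1
  · rw [← Real.exp_nat_mul]
    ring_nf
  refine sum_congr rfl fun k _ => ?_
  rw [mul_pow, ← Real.exp_nat_mul]
  ring_nf

theorem stmt_13 (α lam τ : ℝ) (hα0 : 0 < α) (hα1 : α < 1) (hτ : 0 < τ)
    (v : ℕ → ℝ) (n : ℕ) (hn : 1 ≤ n) :
    v (n - 1) * delta α lam τ v n ≥
      (1 / 2) * Real.exp ((1 - α / 2) * lam * τ) *
          delta α (2 * lam) τ (fun k => (v k) ^ 2) n -
        (Real.exp ((1 - α / 2) * lam * τ) / (2 * (lcoef α 0 - lcoef α 1))) * τ ^ α *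
          (delta α lam τ v n) ^ 2 := by
  set w : ℕ → ℝ := fun k => Real.exp (-(k * (lam * τ))) * v (n - k)
  have hw : ∑ k ∈ range (n + 1), g α k * w k ^ 2 ≤
      2 * w 1 * ∑ k ∈ range (n + 1), g α k * w k + (∑ k ∈ range (n + 1), g α k * w k) ^ 2 / α :=
    sum_mul_sq_le hα0 hn (g_one α) (fun k hk => g_nonpos hα0 hα1 (by omega))
      (lcoef_nonneg hα0 hα1 n) w
  have hv : v (n - 1) = Real.exp (lam * τ) * w 1 := by
    simp [w, ← mul_assoc, ← Real.exp_add]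
  have hexp : Real.exp ((1 - α / 2) * lam * τ) =
      Real.exp (lam * τ) / Real.exp (α / 2 * (lam * τ)) := by
    rw [← Real.exp_sub]
    ring_nf
  have hτα : τ ^ α = (τ ^ (-α))⁻¹ := by
    rw [Real.rpow_neg hτ.le, inv_inv]
  rw [delta_sq_eq, delta_eq, hv, hexp, lcoef_zero_sub_lcoef_one, hτα, ge_iff_le, ← sub_nonneg]
  generalize ∑ k ∈ range (n + 1), g α k * w k = S at hw ⊢
  generalize ∑ k ∈ range (n + 1), g α k * w k ^ 2 = S₂ at hw ⊢
  have hfactor : 0 ≤ τ ^ (-α) * Real.exp (lam * τ) * Real.exp (α / 2 * (lam * τ)) / 2 := by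
    positivity
  refine le_of_le_of_eq (mul_nonneg hfactor (sub_nonneg.2 hw)) ?_
  field_simp
  ring
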